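/- Let R be an associative unital ring (not necessarily commutative), α : ℤ → R a family of elements, and S_s^k(n) the associated non-commutative Svinin polynomials. Then for every integer r ≥ 1 and every n ∈ ℤ, α_n · S_r^r(n+r) − S_r^r(n+r−2) · α_n = S_r^{r+1}(n+r) − S_r^{r+1}(n+r−1). -/

import Mathlib

/-!
Splitting off the first summand of the defining sum gives the left recursion
`S_{s+1}^{k+1}(n) = α_{n-k} S_{s+1}^k(n) + S_s^{k+1}(n-1)`, and induction on `k` gives the mirror
recursion `S_{s+1}^{k+1}(n) = S_s^{k+1}(n) + S_{s+1}^k(n-1) α_{n-s}`. Subtracting the second at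
`n - 1` from the first at `n` cancels `S_s^{k+1}(n-1)`; the theorem is the case `k = s + 1 = r`.
-/

/-- Non-commutative Svinin polynomials: `svinin α s k n` is `S_s^k(n)`, defined by
`S_s^0(n) = 1` and `S_s^k(n) = Σ_{j=0}^{s−1} α_{n−k−j+1} · S_{s−j}^{k−1}(n−j)` for `k ≥ 1`. -/
def svinin {R : Type*} [Ring R] (α : ℤ → R) : ℕ → ℕ → ℤ → R
  | _, 0, _ => 1
  | s, k + 1, n =>
      ∑ j ∈ Finset.range s,
        α (n - ((k : ℤ) + 1) - (j : ℤ) + 1) * svinin α (s - j) k (n - (j : ℤ))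

section

variable {R : Type*} [Ring R] (α : ℤ → R)

@[simp] lemma svinin_zero (s : ℕ) (n : ℤ) : svinin α s 0 n = 1 := rfl

lemma svinin_succ (s k : ℕ) (n : ℤ) :
    svinin α s (k + 1) n = ∑ j ∈ Finset.range s, α (n - k - j) * svinin α (s - j) k (n - j) := by
  rw [svinin]
  refine Finset.sum_congr rfl fun j _ => ?_
  congr 2
  ring

@[simp] lemma svinin_zero_succ (k : ℕ) (n : ℤ) : svinin α 0 (k + 1) n = 0 := by
  simp [svinin_succ]

lemma svinin_succ_succ_left (s k : ℕ) (n : ℤ) :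
    svinin α (s + 1) (k + 1) n = α (n - k) * svinin α (s + 1) k n + svinin α s (k + 1) (n - 1) := by
  rw [svinin_succ, Finset.sum_range_succ', add_comm, svinin_succ α s]
  congr 1
  · simp
  · refine Finset.sum_congr rfl fun j _ => ?_
    rw [Nat.add_sub_add_right]
    congr 2 <;> push_cast <;> ring

lemma svinin_succ_succ_right (s k : ℕ) (n : ℤ) :
    svinin α (s + 1) (k + 1) n =
      svinin α s (k + 1) n + svinin α (s + 1) k (n - 1) * α (n - s) := by
  induction k generalizing s n with
  | zero => simp [svinin_succ, Finset.sum_range_succ]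
  | succ k ih =>
    have hterm : ∀ j ∈ Finset.range (s + 1),
        α (n - (k + 1 : ℕ) - j) * svinin α (s + 1 - j) (k + 1) (n - j) =
          α (n - (k + 1 : ℕ) - j) * svinin α (s - j) (k + 1) (n - j) +
            α (n - 1 - k - j) * svinin α (s + 1 - j) k (n - 1 - j) * α (n - s) := by
      intro j hj
      have hjs : j ≤ s := Nat.lt_succ_iff.mp (Finset.mem_range.mp hj)
      have h1 : n - j - 1 = n - 1 - j := by ring
      have h2 : n - j - ((s - j : ℕ) : ℤ) = n - s := by push_cast [hjs]; ring
      have h3 : n - ((k + 1 : ℕ) : ℤ) - j = n - 1 - k - j := by push_cast; ring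
      rw [Nat.sub_add_comm hjs, ih, h1, h2, h3, mul_add, mul_assoc]
    rw [svinin_succ, Finset.sum_congr rfl hterm, Finset.sum_add_distrib, ← Finset.sum_mul,
      Finset.sum_range_succ, svinin_succ α s, svinin_succ α (s + 1) k]
    simp

lemma svinin_succ_sub_svinin_succ (s k : ℕ) (n : ℤ) :
    svinin α (s + 1) (k + 1) n - svinin α (s + 1) (k + 1) (n - 1) =
      α (n - k) * svinin α (s + 1) k n - svinin α (s + 1) k (n - 2) * α (n - 1 - s) := by
  rw [svinin_succ_succ_left, svinin_succ_succ_right α s k (n - 1), sub_sub n, one_add_one_eq_two]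
  abel

end

/-- For every `r ≥ 1` and `n ∈ ℤ`:
`α_n · S_r^r(n+r) − S_r^r(n+r−2) · α_n = S_r^{r+1}(n+r) − S_r^{r+1}(n+r−1)`. -/
theorem svinin_commutator_identity {R : Type*} [Ring R] (α : ℤ → R)
    (r : ℕ) (hr : 1 ≤ r) (n : ℤ) :
    α n * svinin α r r (n + r) - svinin α r r (n + r - 2) * α n =
      svinin α r (r + 1) (n + r) - svinin α r (r + 1) (n + r - 1) := by
  obtain ⟨s, rfl⟩ := Nat.exists_eq_add_of_le' hr
  rw [svinin_succ_sub_svinin_succ]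
  congr 3 <;> push_cast <;> ring
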